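/- arXiv:2603.12348 — 3 statements merged into one kernel-verified Lean document; each statement's English description precedes it below -/
import Mathlib

section
/- The Frattini subgroup of the wreathed 2-group W (the intersection of its maximal subgroups) equals the subgroup ⟨a², b², ab⟩ generated by a², b² and ab; this subgroup has index 4 in W, and the quotient W/Φ(W) is isomorphic to C_2 × C_2. -/
namespace Wreathed

/-- The cyclic group of order `2^n`. -/
abbrev C (n : ℕ) : Type := Multiplicative (ZMod (2^n))

/-- The coordinate-swapping automorphism of `C n × C n`. -/
def swapAut (n : ℕ) : MulAut (C n × C n) := MulEquiv.prodComm

lemma swapAut_mul_self (n : ℕ) : swapAut n * swapAut n = 1 := by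
  ext x <;> rfl

lemma two_cases (x : Multiplicative (ZMod 2)) :
    x = 1 ∨ x = Multiplicative.ofAdd 1 := by
  revert x; decide

/-- The action of `C_2` on `C n × C n` by swapping the two coordinates. -/
def act (n : ℕ) : Multiplicative (ZMod 2) →* MulAut (C n × C n) where
  toFun x := if x = 1 then 1 else swapAut n
  map_one' := if_pos rfl
  map_mul' := by
    have h11 : (Multiplicative.ofAdd 1 : Multiplicative (ZMod 2)) *
        Multiplicative.ofAdd 1 = 1 := by decide
    have h1ne : (Multiplicative.ofAdd 1 : Multiplicative (ZMod 2)) ≠ 1 := by decide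
    intro x y
    rcases two_cases x with hx | hx <;> rcases two_cases y with hy | hy <;>
      subst hx <;> subst hy <;>
      simp [h11, h1ne, swapAut_mul_self]

/-- The wreathed 2-group `W = (C_{2^n} × C_{2^n}) ⋊ C_2`,
i.e. the wreath product `Z_{2^n} ≀ Z_2`. -/
abbrev W (n : ℕ) : Type := (C n × C n) ⋊[act n] (Multiplicative (ZMod 2))

/-- The element `a = ((g,1); 0)`. -/
def a (n : ℕ) : W n := SemidirectProduct.inl (Multiplicative.ofAdd 1, 1)

/-- The element `b = ((1,g); 0)`. -/
def b (n : ℕ) : W n := SemidirectProduct.inl (1, Multiplicative.ofAdd 1)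

/-- The element `t = ((1,1); 1)`. -/
def t (n : ℕ) : W n := SemidirectProduct.inr (Multiplicative.ofAdd 1)

/-- The base subgroup `A = ⟨a, b⟩`. -/
def A (n : ℕ) : Subgroup (W n) := Subgroup.closure {a n, b n}

/-- The diagonal `Δ = ⟨ab⟩`. -/
def diag (n : ℕ) : Subgroup (W n) := Subgroup.zpowers (a n * b n)

/-- The anti-diagonal `Δ⁻ = ⟨ab⁻¹⟩`. -/
def antidiag (n : ℕ) : Subgroup (W n) := Subgroup.zpowers (a n * (b n)⁻¹)

end Wreathed

/-!
`W/Φ(W)` is the largest elementary abelian 2-quotient of `W`. The homomorphism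
`((x, y); s) ↦ (x + y mod 2, s)` onto `C₂ × C₂` has kernel `⟨a², b², ab⟩`; both of its
coordinates are surjections onto a group of prime order, so their kernels are maximal and `Φ(W)`
lies in the kernel. Conversely, every maximal subgroup of a finite 2-group has index 2 and so
contains all squares, and `a²`, `b²` and `ab = (at)²` are squares.
-/

theorem Subgroup.isCoatom_of_index_prime {G : Type*} [Group G] {H : Subgroup G}
    (hH : H.index.Prime) : IsCoatom H := by
  refine ⟨fun hH_top => by simp [hH_top, Nat.not_prime_one] at hH, fun K hHK => ?_⟩
  rcases hH.eq_one_or_self_of_dvd _ (index_dvd_of_le hHK.le) with hK | hK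
  · exact index_eq_one.mp hK
  · have := relIndex_mul_index hHK.le
    rw [hK, Nat.mul_eq_right hH.ne_zero, relIndex_eq_one] at this
    exact absurd this hHK.not_ge

theorem frattini_le_ker_of_card_prime {G Q : Type*} [Group G] [Group Q] {f : G →* Q}
    (hf : Function.Surjective f) (hQ : (Nat.card Q).Prime) : frattini G ≤ f.ker :=
  frattini_le_coatom <| Subgroup.isCoatom_of_index_prime <| by
    rwa [Subgroup.index_ker, MonoidHom.range_eq_top.mpr hf, Subgroup.card_top]

namespace IsPGroup

open Subgroup

variable {G : Type*} [Group G] [Finite G] {p : ℕ} [Fact p.Prime]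

theorem index_eq_of_isCoatom (hG : IsPGroup p G) {M : Subgroup G} (hM : IsCoatom M) :
    M.index = p := by
  have hp : p.Prime := Fact.out
  obtain ⟨k, hk⟩ := iff_card.mp (hG.to_subgroup M)
  obtain ⟨j, hj⟩ := hG.index M
  have hj0 : j ≠ 0 := by
    rintro rfl
    exact hM.1 (index_eq_one.mp hj)
  have hG_card : Nat.card G = p ^ (j + k) := by rw [← index_mul_card M, hj, hk, pow_add]
  -- `M` lies in a subgroup of order `p * |M|`, which maximality forces to be all of `G`.
  obtain ⟨K, hK, hMK⟩ := Sylow.exists_subgroup_card_pow_succ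
    (hG_card ▸ pow_dvd_pow p (by omega : k + 1 ≤ j + k)) hk
  have hM_ne_K : M ≠ K := by
    rintro rfl
    exact absurd (Nat.pow_right_injective hp.two_le (hk.symm.trans hK)) (by omega)
  have hK_top : K = ⊤ := hM.2 K (hMK.lt_of_ne hM_ne_K)
  rw [hK_top, card_top, hG_card] at hK
  rw [hj, show j = 1 by have := Nat.pow_right_injective hp.two_le hK; omega, pow_one]

theorem pow_mem_of_isCoatom (hG : IsPGroup p G) {M : Subgroup G} (hM : IsCoatom M) (x : G) :
    x ^ p ∈ M := by
  have := hG.isNilpotent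
  have := NormalizerCondition.normal_of_coatom M Group.normalizerCondition_of_isNilpotent hM
  simpa only [hG.index_eq_of_isCoatom hM] using M.pow_index_mem x

theorem pow_mem_frattini (hG : IsPGroup p G) (x : G) : x ^ p ∈ frattini G := by
  simp only [frattini, Order.radical, mem_iInf]
  exact fun M hM => hG.pow_mem_of_isCoatom hM x

end IsPGroup

theorem ZMod.exists_eq_mul_of_castHom_eq_zero {m k : ℕ} [NeZero k] (h : m ∣ k) {u : ZMod k}
    (hu : ZMod.castHom h (ZMod m) u = 0) : ∃ v, u = m * v := by
  rw [← ZMod.natCast_zmod_val u, map_natCast, ZMod.natCast_eq_zero_iff] at hu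
  obtain ⟨j, hj⟩ := hu
  exact ⟨j, by rw [← ZMod.natCast_zmod_val u, hj, Nat.cast_mul]⟩

namespace Wreathed

open Subgroup SemidirectProduct Multiplicative

variable (n : ℕ)

instance : Finite (W n) := Finite.of_equiv _ equivProd.symm

theorem isPGroup_two : IsPGroup 2 (W n) := by
  refine IsPGroup.of_card (n := 2 * n + 1) ?_
  rw [SemidirectProduct.card, Nat.card_prod]
  simp only [Nat.card_eq_fintype_card, Fintype.card_multiplicative, ZMod.card]
  ring

theorem act_ofAdd_one : act n (ofAdd 1) = swapAut n := by simp [act]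

theorem a_pow_mul_b_pow (i j : ℕ) :
    a n ^ i * b n ^ j = inl (ofAdd (i : ZMod (2 ^ n)), ofAdd (j : ZMod (2 ^ n))) := by
  simp only [a, b, ← map_pow, ← map_mul, Prod.pow_mk, one_pow, Prod.mk_mul_mk, mul_one, one_mul,
    ← ofAdd_nsmul, nsmul_one]

theorem commute_a_b : Commute (a n) (b n) := (Commute.all _ _).map inl

theorem t_mul_a_mul_t : t n * a n * t n = b n := by
  refine SemidirectProduct.ext ?_ ?_
  · simp [t, a, b, act_ofAdd_one, swapAut]
  · simp only [mul_right, t, a, b, right_inr, right_inl]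
    decide

theorem a_mul_t_sq : (a n * t n) ^ 2 = a n * b n := by
  rw [sq, mul_assoc, ← mul_assoc (t n), ← t_mul_a_mul_t]

theorem closure_le_frattini : closure {a n ^ 2, b n ^ 2, a n * b n} ≤ frattini (W n) := by
  have := Fact.mk Nat.prime_two
  rw [closure_le]
  rintro x (rfl | rfl | rfl)
  · exact (isPGroup_two n).pow_mem_frattini _
  · exact (isPGroup_two n).pow_mem_frattini _
  · rw [SetLike.mem_coe, ← a_mul_t_sq]
    exact (isPGroup_two n).pow_mem_frattini _

variable {n} (hn : n ≠ 0)

def baseParity : C n × C n →* Multiplicative (ZMod 2) :=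
  (ZMod.castHom (dvd_pow_self 2 hn) (ZMod 2)).toAddMonoidHom.toMultiplicative.comp mulMonoidHom

theorem baseParity_apply (x y : ZMod (2 ^ n)) :
    baseParity hn (ofAdd x, ofAdd y) = ofAdd (ZMod.castHom (dvd_pow_self 2 hn) (ZMod 2) (x + y)) :=
  rfl

theorem baseParity_comp_act (g : Multiplicative (ZMod 2)) :
    (baseParity hn).comp (act n g).toMonoidHom = baseParity hn := by
  rcases two_cases g with rfl | rfl
  · ext; rfl
  · ext x; simp [act_ofAdd_one, swapAut, baseParity, add_comm]

def parity : W n →* Multiplicative (ZMod 2) :=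
  lift (baseParity hn) 1 fun g => by
    rw [MonoidHom.one_apply, map_one, baseParity_comp_act]
    rfl

theorem parity_inl (x : C n × C n) : parity hn (inl x) = baseParity hn x := lift_inl ..

theorem parity_inr (g : Multiplicative (ZMod 2)) : parity hn (inr g) = 1 := lift_inr ..

theorem parity_prod_rightHom_surjective :
    Function.Surjective ((parity hn).prod (rightHom : W n →* _)) := by
  rintro ⟨p, q⟩
  obtain ⟨u, hu⟩ := ZMod.castHom_surjective (dvd_pow_self 2 hn) p.toAdd
  refine ⟨inl (ofAdd u, ofAdd 0) * inr q, Prod.ext ?_ ?_⟩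
  · show parity hn (inl _ * inr q) = p
    rw [map_mul, parity_inl, parity_inr, mul_one, baseParity_apply, add_zero, hu, ofAdd_toAdd]
  · simp

theorem frattini_le_ker_parity_prod_rightHom :
    frattini (W n) ≤ ((parity hn).prod (rightHom : W n →* _)).ker := by
  have hcard : (Nat.card (Multiplicative (ZMod 2))).Prime := by simpa using Nat.prime_two
  have hsurj := parity_prod_rightHom_surjective hn
  rw [MonoidHom.ker_prod]
  exact le_inf (frattini_le_ker_of_card_prime (Prod.fst_surjective.comp hsurj) hcard)
    (frattini_le_ker_of_card_prime rightHom_surjective hcard)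

theorem ker_parity_prod_rightHom_le_closure :
    ((parity hn).prod (rightHom : W n →* _)).ker ≤ closure {a n ^ 2, b n ^ 2, a n * b n} := by
  intro w hw
  rw [MonoidHom.mem_ker, MonoidHom.prod_apply, Prod.mk_eq_one, rightHom_eq_right] at hw
  obtain ⟨hpar, hright⟩ := hw
  obtain ⟨⟨u, v⟩, rfl⟩ : ∃ p : ZMod (2 ^ n) × ZMod (2 ^ n), inl (ofAdd p.1, ofAdd p.2) = w :=
    ⟨(w.left.1.toAdd, w.left.2.toAdd), SemidirectProduct.ext rfl hright.symm⟩
  rw [parity_inl, baseParity_apply, ofAdd_eq_one] at hpar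
  have hdiff : ZMod.castHom (dvd_pow_self 2 hn) (ZMod 2) (v - u) = 0 := by
    rw [show v - u = u + v - 2 * u by ring, map_sub, hpar, map_mul, map_ofNat,
      show (2 : ZMod 2) = 0 from rfl, zero_mul, sub_zero]
  obtain ⟨c, hc⟩ := ZMod.exists_eq_mul_of_castHom_eq_zero _ hdiff
  have hw : (inl (ofAdd u, ofAdd v) : W n) = (a n * b n) ^ u.val * (b n ^ 2) ^ c.val := by
    rw [(commute_a_b n).mul_pow, mul_assoc, ← pow_mul, ← pow_add, a_pow_mul_b_pow]
    push_cast
    rw [ZMod.natCast_zmod_val, ZMod.natCast_zmod_val, show v = u + 2 * c by linear_combination hc]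
  rw [hw]
  exact mul_mem (pow_mem (subset_closure (by simp)) _) (pow_mem (subset_closure (by simp)) _)

end Wreathed

open Wreathed in
/-- The Frattini subgroup of the wreathed 2-group equals `⟨a², b², ab⟩`; it has index 4,
and the quotient `W/Φ(W)` is isomorphic to `C_2 × C_2`. -/
theorem frattini_wreathed (n : ℕ) (hn : 2 ≤ n) :
    frattini (W n) = Subgroup.closure {a n ^ 2, b n ^ 2, a n * b n} ∧
      (frattini (W n)).index = 4 ∧
      Nonempty ((W n ⧸ frattini (W n)) ≃*
        (Multiplicative (ZMod 2) × Multiplicative (ZMod 2))) := by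
  have hn0 : n ≠ 0 := by omega
  have hsurj := parity_prod_rightHom_surjective hn0
  have hle := frattini_le_ker_parity_prod_rightHom hn0
  have hge := ker_parity_prod_rightHom_le_closure hn0
  have hker : frattini (W n) = ((parity hn0).prod SemidirectProduct.rightHom).ker :=
    hle.antisymm (hge.trans (closure_le_frattini n))
  refine ⟨(hle.trans hge).antisymm (closure_le_frattini n), ?_, ?_⟩
  · rw [hker, Subgroup.index_ker, MonoidHom.range_eq_top.mpr hsurj, Subgroup.card_top]
    simp
  · exact ⟨(QuotientGroup.quotientMulEquivOfEq hker).trans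
      (QuotientGroup.quotientKerEquivOfSurjective _ hsurj)⟩
end

section
/- In the wreathed 2-group W, for every element w ∈ W with w ∉ A, the centralizer of w in the base subgroup A equals the diagonal: C_A(w) = Δ = ⟨ab⟩. -/
/-
The base `A` is the image of `inl`, i.e. the kernel of the projection to `C₂`, and any
`w ∉ A` conjugates it by the coordinate swap. Since `C_{2^n} × C_{2^n}` is abelian, `inl p`
commutes with `w` exactly when `p` is fixed by the swap, i.e. when `inl p` lies in the diagonal.
-/

namespace Wreathed

open SemidirectProduct

section Commute

variable {N G : Type*} [CommGroup N] [Group G] {φ : G →* MulAut N}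

theorem commute_inl_iff (p : N) (w : N ⋊[φ] G) :
    Commute (inl p) w ↔ φ w.right p = p := by
  rw [Commute, SemiconjBy, SemidirectProduct.ext_iff]
  simp only [mul_left, mul_right, left_inl, right_inl, map_one, MulAut.one_apply, one_mul,
    mul_one, mul_comm p, mul_right_inj, and_true]
  exact eq_comm

end Commute

theorem exists_zpow_ofAdd_one_eq {m : ℕ} (x : Multiplicative (ZMod m)) :
    ∃ k : ℤ, Multiplicative.ofAdd (1 : ZMod m) ^ k = x := by
  obtain ⟨k, hk⟩ := ZMod.intCast_surjective x.toAdd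
  exact ⟨k, by rw [← ofAdd_zsmul, zsmul_one, hk, ofAdd_toAdd]⟩

variable {n : ℕ}

theorem act_ofAdd_one_apply (p : C n × C n) : act n (Multiplicative.ofAdd 1) p = p.swap := by
  have h : (Multiplicative.ofAdd 1 : Multiplicative (ZMod 2)) ≠ 1 := by decide
  simp only [act, MonoidHom.coe_mk, OneHom.coe_mk, if_neg h]
  rfl

theorem a_zpow (k : ℤ) : a n ^ k = inl (Multiplicative.ofAdd 1 ^ k, 1) := by
  rw [a, ← map_zpow, Prod.pow_mk, one_zpow]

theorem b_zpow (k : ℤ) : b n ^ k = inl (1, Multiplicative.ofAdd 1 ^ k) := by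
  rw [b, ← map_zpow, Prod.pow_mk, one_zpow]

theorem inl_mem_A (p : C n × C n) : inl p ∈ A n := by
  obtain ⟨k, hk⟩ := exists_zpow_ofAdd_one_eq p.1
  obtain ⟨j, hj⟩ := exists_zpow_ofAdd_one_eq p.2
  have hp : inl p = a n ^ k * b n ^ j := by
    rw [a_zpow, b_zpow, ← map_mul, Prod.mk_mul_mk, mul_one, one_mul, hk, hj]
  rw [hp]
  exact mul_mem (zpow_mem (Subgroup.subset_closure (by simp)) k)
    (zpow_mem (Subgroup.subset_closure (by simp)) j)

theorem A_eq_range_inl : A n = (inl : C n × C n →* W n).range := by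
  refine le_antisymm ?_ ?_
  · rw [A, Subgroup.closure_le, Set.pair_subset_iff]
    exact ⟨⟨_, rfl⟩, ⟨_, rfl⟩⟩
  · rintro _ ⟨p, rfl⟩
    exact inl_mem_A p

theorem right_eq_ofAdd_one_of_notMem_A {w : W n} (hw : w ∉ A n) :
    w.right = Multiplicative.ofAdd 1 := by
  refine (two_cases w.right).resolve_left fun h ↦ hw ?_
  rw [A_eq_range_inl, range_inl_eq_ker_rightHom]
  exact h

theorem commute_inl_iff_of_notMem_A {w : W n} (hw : w ∉ A n) (p : C n × C n) :
    Commute (inl p) w ↔ p.1 = p.2 := by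
  rw [commute_inl_iff, right_eq_ofAdd_one_of_notMem_A hw, act_ofAdd_one_apply, Prod.ext_iff]
  exact ⟨fun h ↦ h.2, fun h ↦ ⟨h.symm, h⟩⟩

theorem a_mul_b : a n * b n = inl (Multiplicative.ofAdd 1, Multiplicative.ofAdd 1) := by
  rw [a, b, ← map_mul, Prod.mk_mul_mk, mul_one, one_mul]

theorem inl_mem_diag (x : C n) : inl (x, x) ∈ diag n := by
  obtain ⟨k, rfl⟩ := exists_zpow_ofAdd_one_eq x
  exact ⟨k, by simp only [a_mul_b, ← Prod.pow_mk, map_zpow]⟩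

end Wreathed

open Wreathed in
theorem centralizer_outside_base_general (n : ℕ) :
    ∀ w : W n, w ∉ A n → A n ⊓ Subgroup.centralizer {w} = diag n := by
  intro w hw
  refine le_antisymm ?_ (le_inf ?_ ?_)
  · rintro _ ⟨hzA, hzw⟩
    obtain ⟨⟨x, y⟩, rfl⟩ := A_eq_range_inl (n := n) ▸ hzA
    obtain rfl : x = y :=
      (commute_inl_iff_of_notMem_A hw _).1 (Subgroup.mem_centralizer_singleton_iff.1 hzw)
    exact inl_mem_diag x
  · rw [diag, a_mul_b, A_eq_range_inl, Subgroup.zpowers_le]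
    exact ⟨_, rfl⟩
  · rw [diag, a_mul_b, Subgroup.zpowers_le, Subgroup.mem_centralizer_singleton_iff]
    exact (commute_inl_iff_of_notMem_A hw _).2 rfl

open Wreathed in
/-- In the wreathed 2-group, for every `w ∉ A`, the centralizer of `w` in the base
subgroup `A` is the diagonal: `C_A(w) = Δ = ⟨ab⟩`. -/
theorem centralizer_outside_base (n : ℕ) (hn : 2 ≤ n) :
    ∀ w : W n, w ∉ A n → A n ⊓ Subgroup.centralizer {w} = diag n :=
  centralizer_outside_base_general n
end

section
/- Let G be a minimal counterexample as in the context. Then the Frattini subgroup Φ(G) of G (the intersection of all maximal subgroups of G) is a 2-group: every element of Φ(G) has order a power of 2. -/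
/-- The subgroup of inner automorphisms of `G`, i.e. `Inn(G)` inside `Aut(G)`. -/
def innAut (G : Type*) [Group G] : Subgroup (MulAut G) :=
  (MulAut.conj : G →* MulAut G).range

instance innAut_normal (G : Type*) [Group G] : (innAut G).Normal := by
  constructor
  intro x hx f
  obtain ⟨g, rfl⟩ := hx
  refine ⟨f g, ?_⟩
  ext y
  simp only [MulAut.conj_apply, MulAut.mul_apply, map_mul, map_inv,
    MulEquiv.apply_symm_apply, MulAut.inv_def]

/-- An automorphism is class-preserving if it maps every element to a conjugate. -/
def IsClassPreserving {G : Type*} [Group G] (φ : MulAut G) : Prop :=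
  ∀ x : G, IsConj x (φ x)

/-- An automorphism is a Coleman automorphism if its restriction to every Sylow subgroup
is induced by conjugation by a group element. -/
def IsColeman {G : Type*} [Group G] (φ : MulAut G) : Prop :=
  ∀ (p : ℕ), p.Prime → ∀ P : Sylow p G, ∃ y : G,
    ∀ u ∈ (P : Subgroup G), φ u = y⁻¹ * u * y

/-- The subgroup `Aut_c(G)` of class-preserving automorphisms. -/
def autC (G : Type*) [Group G] : Subgroup (MulAut G) where
  carrier := {φ | IsClassPreserving φ}
  one_mem' := fun x => by simpa using IsConj.refl x
  mul_mem' := by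
    intro φ ψ hφ hψ x
    exact (hψ x).trans (hφ (ψ x))
  inv_mem' := by
    intro φ hφ x
    have := (hφ (φ⁻¹ x)).symm
    simpa using this

/-- The subgroup `Aut_Col(G)` of Coleman automorphisms. -/
def autCol (G : Type*) [Group G] : Subgroup (MulAut G) where
  carrier := {φ | IsColeman φ}
  one_mem' := fun p hp P => ⟨1, fun u _ => by simp⟩
  mul_mem' := by
    intro φ ψ hφ hψ p hp P
    obtain ⟨y, hy⟩ := hψ p hp P
    obtain ⟨z, hz⟩ := hφ p hp (y⁻¹ • P)
    refine ⟨y * z, fun u hu => ?_⟩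
    have hmem : ψ u ∈ ((y⁻¹ • P : Sylow p G) : Subgroup G) := by
      rw [Sylow.coe_subgroup_smul, Subgroup.mem_pointwise_smul_iff_inv_smul_mem]
      have : (MulAut.conj y⁻¹)⁻¹ • (ψ u) = u := by
        rw [hy u hu]
        simp [MulAut.smul_def, mul_assoc]
      rw [this]; exact hu
    have h2 := hz _ hmem
    calc (φ * ψ) u = φ (ψ u) := rfl
      _ = z⁻¹ * (ψ u) * z := h2
      _ = (y * z)⁻¹ * u * (y * z) := by rw [hy u hu]; group
  inv_mem' := by
    intro φ hφ p hp P
    obtain ⟨z, hz⟩ := hφ p hp (φ⁻¹ • P)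
    refine ⟨z⁻¹, fun u hu => ?_⟩
    have hmem : φ⁻¹ u ∈ ((φ⁻¹ • P : Sylow p G) : Subgroup G) := by
      rw [Sylow.pointwise_smul_def, Subgroup.mem_pointwise_smul_iff_inv_smul_mem]
      have : (φ⁻¹)⁻¹ • (φ⁻¹ u) = u := by
        simp [MulAut.smul_def]
      rw [this]; exact hu
    have h2 := hz _ hmem
    have : u = z⁻¹ * (φ⁻¹ u) * z := by
      conv_lhs => rw [show u = φ (φ⁻¹ u) by simp]
      exact h2
    rw [show (φ⁻¹ : MulAut G) u = (z⁻¹)⁻¹ * ((z⁻¹ * (φ⁻¹ u) * z) * z⁻¹) from by group]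
    rw [← this]; group

/-- The image `Out_c(G)` of `Aut_c(G)` in `Out(G) = Aut(G)/Inn(G)`. -/
def outC (G : Type*) [Group G] : Subgroup (MulAut G ⧸ innAut G) :=
  (autC G).map (QuotientGroup.mk' (innAut G))

/-- The image `Out_Col(G)` of `Aut_Col(G)` in `Out(G) = Aut(G)/Inn(G)`. -/
def outCol (G : Type*) [Group G] : Subgroup (MulAut G ⧸ innAut G) :=
  (autCol G).map (QuotientGroup.mk' (innAut G))

/-- A group has wreathed Sylow 2-subgroups if its Sylow 2-subgroups are isomorphic to
the wreathed 2-group `(C_{2^n} × C_{2^n}) ⋊ C_2` for some `n ≥ 2`. -/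
def HasWreathedSylow2 (G : Type*) [Group G] : Prop :=
  ∃ n : ℕ, 2 ≤ n ∧ ∀ P : Sylow 2 G, Nonempty ((P : Subgroup G) ≃* Wreathed.W n)


/-!
Suppose `Φ(G)` is not a 2-group. Since `Φ(G)` is nilpotent, its Sylow `q`-subgroup `N` for an
odd prime `q` dividing `|Φ(G)|` is a nontrivial characteristic subgroup of `G` of odd order.
The Sylow 2-subgroups of `G ⧸ N` are isomorphic to those of `G`, and `φ` induces a
class-preserving Coleman automorphism of 2-power order of the smaller group `G ⧸ N`, which
is therefore inner by minimality. Correcting `φ` by an inner automorphism gives `ψ ≡ φ` modulo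
`Inn(G)` acting trivially on `G ⧸ N`. The 2-part `θ` of `ψ` then fixes a point in every coset
of `N` (a 2-group permuting a set of odd size), so `C_G(θ) N = G`; as `N ≤ Φ(G)` this forces
`θ = 1`. Hence `ψ` has odd order, and the class of `φ` in `Out(G)`, having both odd and
2-power order, is trivial.
-/

open Subgroup

section QuotientMulAut

variable {G : Type*} [Group G] (N : Subgroup G) [N.Characteristic]

def quotientMulAut : MulAut G →* MulAut (G ⧸ N) where
  toFun φ := QuotientGroup.congr N N φ (characteristic_iff_map_eq.mp ‹_› φ)
  map_one' := by
    ext x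
    induction x using QuotientGroup.induction_on
    rfl
  map_mul' φ ψ := by
    ext x
    induction x using QuotientGroup.induction_on
    rfl

@[simp]
lemma quotientMulAut_apply_mk (φ : MulAut G) (x : G) :
    quotientMulAut N φ (x : G ⧸ N) = φ x :=
  rfl

lemma mem_ker_quotientMulAut {ψ : MulAut G} :
    ψ ∈ (quotientMulAut N).ker ↔ ∀ x : G, (ψ x : G ⧸ N) = x := by
  rw [MonoidHom.mem_ker, MulEquiv.ext_iff, QuotientGroup.mk_surjective.forall]
  rfl

lemma quotientMulAut_conj (g : G) :
    quotientMulAut N (MulAut.conj g) = MulAut.conj (g : G ⧸ N) := by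
  ext x
  induction x using QuotientGroup.induction_on
  rfl

lemma IsClassPreserving.quotientMulAut {φ : MulAut G} (hφ : IsClassPreserving φ) :
    IsClassPreserving (quotientMulAut N φ) := by
  rintro ⟨x⟩
  exact (QuotientGroup.mk' N).map_isConj (hφ x)

lemma IsColeman.quotientMulAut [Finite G] {φ : MulAut G} (hφ : IsColeman φ) :
    IsColeman (quotientMulAut N φ) := by
  intro p hp P
  have : Fact p.Prime := ⟨hp⟩
  obtain ⟨Q, rfl⟩ := Sylow.mapSurjective_surjective (QuotientGroup.mk'_surjective N) p P
  obtain ⟨y, hy⟩ := hφ p hp Q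
  refine ⟨y, ?_⟩
  rintro _ ⟨u, hu, rfl⟩
  simp [hy u hu]

lemma exists_mem_ker_quotientMulAut_of_mem_innAut {φ : MulAut G}
    (hφ : quotientMulAut N φ ∈ innAut (G ⧸ N)) :
    ∃ ψ ∈ (quotientMulAut N).ker, (ψ : MulAut G ⧸ innAut G) = φ := by
  obtain ⟨x, hx⟩ := hφ
  obtain ⟨g, rfl⟩ := QuotientGroup.mk_surjective x
  refine ⟨(MulAut.conj g)⁻¹ * φ, ?_, ?_⟩
  · rw [MonoidHom.mem_ker, map_mul, map_inv, quotientMulAut_conj, ← hx, inv_mul_cancel]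
  · rw [QuotientGroup.mk_mul, QuotientGroup.mk_inv,
      (QuotientGroup.eq_one_iff (N := innAut G) _).mpr ⟨g, rfl⟩, inv_one, one_mul]

end QuotientMulAut

section FrattiniCoprime

variable {G : Type*} [Group G] [Finite G] {N : Subgroup G} [N.Characteristic] {p : ℕ}
  [Fact p.Prime]

lemma exists_mul_mem_fixed_of_mem_ker_quotientMulAut (hN : (Nat.card N).Coprime p)
    {θ : MulAut G} (hθ : θ ∈ (quotientMulAut N).ker) {n : ℕ} (hθn : θ ^ p ^ n = 1) (x : G) :
    ∃ u ∈ N, θ (x * u) = x * u := by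
  classical
  -- `θ` acting on the coset `x N`, transported to `N`
  let τ : Equiv.Perm G := MulAut.conj (Equiv.mulLeft x)⁻¹ (MulAut.toPerm (M := G) θ)
  have hτ : ∀ y, τ y = x⁻¹ * θ (x * y) := fun _ => rfl
  have hτN : ∀ y, τ y ∈ N ↔ y ∈ N := by
    intro y
    rw [← QuotientGroup.eq_one_iff, ← QuotientGroup.eq_one_iff (N := N) y, hτ,
      QuotientGroup.mk_mul, QuotientGroup.mk_inv, (mem_ker_quotientMulAut N).mp hθ]
    simp
  have hτn : τ ^ p ^ n = 1 := by rw [← map_pow, ← map_pow, hθn, map_one, map_one]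
  have := Fintype.ofFinite N
  have hcard : ¬ p ∣ Fintype.card N := by
    rw [Fintype.card_eq_nat_card]
    exact (Nat.Prime.coprime_iff_not_dvd Fact.out).mp hN.symm
  obtain ⟨⟨u, hu⟩, hfix⟩ := Equiv.Perm.exists_fixed_point_of_prime hcard
    (σ := τ.subtypePerm hτN) (n := n) (by ext y; simp [Equiv.Perm.subtypePerm_pow, hτn])
  exact ⟨u, hu, inv_mul_eq_iff_eq_mul.mp (congrArg Subtype.val hfix)⟩

lemma eq_one_of_mem_ker_quotientMulAut (hNΦ : N ≤ frattini G) (hN : (Nat.card N).Coprime p)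
    {θ : MulAut G} (hθ : θ ∈ (quotientMulAut N).ker) {n : ℕ} (hθn : θ ^ p ^ n = 1) : θ = 1 := by
  let C := (θ : G →* G).eqLocus (MonoidHom.id G)
  have hCN : C ⊔ N = ⊤ := by
    refine eq_top_iff.mpr fun x _ => ?_
    obtain ⟨u, hu, hfix⟩ := exists_mul_mem_fixed_of_mem_ker_quotientMulAut hN hθ hθn x
    rw [← mul_inv_cancel_right x u]
    exact mul_mem (mem_sup_left hfix) (mem_sup_right (inv_mem hu))
  have hC : C = ⊤ := frattini_nongenerating (eq_top_iff.mpr (hCN ▸ sup_le_sup_left hNΦ C))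
  ext x
  exact (hC ▸ mem_top x : x ∈ C)

lemma not_dvd_orderOf_of_mem_ker_quotientMulAut (hNΦ : N ≤ frattini G)
    (hN : (Nat.card N).Coprime p) {ψ : MulAut G} (hψ : ψ ∈ (quotientMulAut N).ker) :
    ¬ p ∣ orderOf ψ := by
  have hθ : ψ ^ ordCompl[p] (orderOf ψ) = 1 := by
    refine eq_one_of_mem_ker_quotientMulAut hNΦ hN (pow_mem hψ _)
      (n := (orderOf ψ).factorization p) ?_
    rw [← pow_mul, mul_comm, Nat.ordProj_mul_ordCompl_eq_self, pow_orderOf_eq_one]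
  exact fun hdvd => Nat.not_dvd_ordCompl Fact.out (orderOf_pos ψ).ne'
    (hdvd.trans (orderOf_dvd_of_pow_eq_one hθ))

end FrattiniCoprime

lemma exists_prime_ne_dvd_card_of_not_isPGroup {G : Type*} [Group G] [Finite G] {p : ℕ}
    (h : ¬ IsPGroup p G) : ∃ q : ℕ, q.Prime ∧ q ≠ p ∧ q ∣ Nat.card G := by
  by_contra! hq
  exact h (IsPGroup.of_card (Nat.eq_prime_pow_of_unique_prime_dvd Nat.card_pos.ne'
    fun hd hdvd => by_contra fun hne => hq _ hd hne hdvd))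

lemma exists_characteristic_le_coprime_of_not_isPGroup {G : Type*} [Group G] [Finite G]
    {p : ℕ} [Fact p.Prime] (H : Subgroup G) [H.Characteristic] [Group.IsNilpotent H]
    (h : ¬ IsPGroup p H) :
    ∃ N : Subgroup G, N.Characteristic ∧ N ≤ H ∧ N ≠ ⊥ ∧ (Nat.card N).Coprime p := by
  obtain ⟨q, hq, hqp, hqH⟩ := exists_prime_ne_dvd_card_of_not_isPGroup h
  have : Fact q.Prime := ⟨hq⟩
  obtain ⟨Q⟩ : Nonempty (Sylow q H) := inferInstance
  have : (Q : Subgroup H).Characteristic := Q.characteristic_of_normal inferInstance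
  refine ⟨(Q : Subgroup H).map H.subtype, inferInstance, map_subtype_le _, ?_, ?_⟩
  · rw [Ne, map_eq_bot_iff_of_injective _ H.subtype_injective]
    exact Q.ne_bot_of_dvd_card hqH
  · obtain ⟨n, hn⟩ := IsPGroup.iff_card.mp Q.isPGroup'
    rw [card_map_of_injective H.subtype_injective, hn]
    exact ((Nat.coprime_primes hq Fact.out).mpr hqp).pow_left n

lemma Sylow.nonempty_mulEquiv_of_coprime_card {G : Type*} [Group G] [Finite G] {p : ℕ}
    [Fact p.Prime] (N : Subgroup G) [N.Normal] (hN : (Nat.card N).Coprime p)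
    (P : Sylow p (G ⧸ N)) : ∃ Q : Sylow p G, Nonempty ((Q : Subgroup G) ≃* P) := by
  obtain ⟨Q, rfl⟩ := Sylow.mapSurjective_surjective (QuotientGroup.mk'_surjective N) p P
  have hQN : Disjoint (Q : Subgroup G) N :=
    Q.isPGroup'.disjoint_of_coprime IsPGroup.card hN.symm
  let f := (QuotientGroup.mk' N).comp (Q : Subgroup G).subtype
  have hf : Function.Injective f := by
    refine (injective_iff_map_eq_one f).mpr fun u hu => ?_
    exact Subtype.ext (disjoint_def.mp hQN u.2 ((QuotientGroup.eq_one_iff _).mp hu))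
  refine ⟨Q, ⟨(MonoidHom.ofInjective hf).trans (MulEquiv.subgroupCongr ?_)⟩⟩
  rw [MonoidHom.range_comp, range_subtype, Sylow.coe_mapSurjective]

lemma HasWreathedSylow2.quotient {G : Type*} [Group G] [Finite G] (hW : HasWreathedSylow2 G)
    (N : Subgroup G) [N.Normal] (hN : (Nat.card N).Coprime 2) : HasWreathedSylow2 (G ⧸ N) := by
  obtain ⟨n, hn, hiso⟩ := hW
  refine ⟨n, hn, fun P => ?_⟩
  obtain ⟨Q, ⟨e⟩⟩ := Sylow.nonempty_mulEquiv_of_coprime_card N hN P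
  obtain ⟨w⟩ := hiso Q
  exact ⟨e.symm.trans w⟩

lemma Subgroup.mem_of_coe_eq_of_coprime_orderOf {M : Type*} [Group M] (K : Subgroup M)
    [K.Normal] {x y : M} (hxy : (x : M ⧸ K) = y) (hcop : (orderOf x).Coprime (orderOf y)) :
    x ∈ K := by
  rw [← QuotientGroup.eq_one_iff, ← orderOf_eq_one_iff]
  exact Nat.eq_one_of_dvd_coprimes hcop (orderOf_map_dvd (QuotientGroup.mk' K) x)
    (hxy ▸ orderOf_map_dvd (QuotientGroup.mk' K) y)

lemma mem_innAut_of_odd_card_outC_inf_outCol {H : Type*} [Group H]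
    (hodd : Odd (Nat.card ↥(outC H ⊓ outCol H))) {φ : MulAut H} (hc : IsClassPreserving φ)
    (hcol : IsColeman φ) {k : ℕ} (hφ : orderOf φ ∣ 2 ^ k) : φ ∈ innAut H := by
  have hmem : (φ : MulAut H ⧸ innAut H) ∈ outC H ⊓ outCol H := ⟨⟨φ, hc, rfl⟩, ⟨φ, hcol, rfl⟩⟩
  rw [← QuotientGroup.eq_one_iff, ← orderOf_eq_one_iff]
  exact Nat.eq_one_of_dvd_coprimes ((Nat.coprime_two_right.mpr hodd).pow_right k)
    (Subgroup.orderOf_dvd_natCard _ hmem) ((orderOf_map_dvd (QuotientGroup.mk' _) φ).trans hφ)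

/-- In a minimal counterexample, the Frattini subgroup is a 2-group. -/
theorem minimal_counterexample_frattini_two_group
    (G : Type) [Group G] [Finite G]
    (hW : HasWreathedSylow2 G)
    (φ : MulAut G) (hcp : IsClassPreserving φ) (hcol : IsColeman φ)
    (hord : ∃ k : ℕ, orderOf φ = 2 ^ k) (hni : φ ∉ innAut G)
    (hmin : ∀ (H : Type) [Group H] [Finite H], Nat.card H < Nat.card G →
      HasWreathedSylow2 H → Odd (Nat.card ↥(outC H ⊓ outCol H))) :
    IsPGroup 2 (frattini G) := by
  by_contra hΦ
  have : Group.IsNilpotent (frattini G) := frattini_nilpotent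
  obtain ⟨N, _, hNΦ, hN1, hN⟩ := exists_characteristic_le_coprime_of_not_isPGroup _ hΦ
  have hlt : Nat.card (G ⧸ N) < Nat.card G := by
    rw [card_eq_card_quotient_mul_card_subgroup N]
    exact lt_mul_of_one_lt_right Nat.card_pos (N.one_lt_card_iff_ne_bot.mpr hN1)
  obtain ⟨k, hk⟩ := hord
  have hφN : quotientMulAut N φ ∈ innAut (G ⧸ N) :=
    mem_innAut_of_odd_card_outC_inf_outCol (hmin _ hlt (hW.quotient N hN))
      (hcp.quotientMulAut N) (hcol.quotientMulAut N) (hk ▸ orderOf_map_dvd _ φ)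
  obtain ⟨ψ, hψ, hψφ⟩ := exists_mem_ker_quotientMulAut_of_mem_innAut N hφN
  have hψ2 : ¬ 2 ∣ orderOf ψ := not_dvd_orderOf_of_mem_ker_quotientMulAut hNΦ hN hψ
  exact hni ((innAut G).mem_of_coe_eq_of_coprime_orderOf hψφ.symm
    (hk ▸ (Nat.prime_two.coprime_iff_not_dvd.mpr hψ2).pow_left k))
end
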